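/- arXiv:1510.02139 — 5 statements merged into one kernel-verified Lean document; each statement's English description precedes it below -/
import Mathlib

section
/- (Classical logic) Every partially Cauchy sequence of real numbers is Cauchy: if for every strictly increasing h : ℕ → ℕ with h(n) > n we have lim_{n→∞} diam{x_n, ..., x_{h(n)}} = 0, then (x_n) is a Cauchy sequence. -/
theorem partiallyCauchy_is_cauchy (x : ℕ → ℝ)
    (hx : ∀ h : ℕ → ℕ, StrictMono h → (∀ n, n < h n) →
      Filter.Tendsto (fun n => Metric.diam (x '' Set.Icc n (h n)))
        Filter.atTop (nhds 0)) :
    CauchySeq x := by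
  by_contra hc
  rw [Metric.cauchySeq_iff] at hc
  push_neg at hc
  obtain ⟨ε, hε, hbad⟩ := hc
  choose a ha b hb hd using hbad
  set m : ℕ → ℕ := fun N => min (a N) (b N) with hm
  set k : ℕ → ℕ := fun N => max (a N) (b N) with hk
  have hmN : ∀ N, N ≤ m N := fun N => le_min (ha N) (hb N)
  have hmk : ∀ N, m N ≤ k N := fun N => min_le_max
  have hdk : ∀ N, ε ≤ dist (x (m N)) (x (k N)) := by
    intro N
    rcases le_total (a N) (b N) with h1 | h1
    · simpa [hm, hk, min_eq_left h1, max_eq_right h1] using hd N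
    · simpa [hm, hk, min_eq_right h1, max_eq_left h1, dist_comm] using hd N
  -- recursive sequence of starting points
  let Nf : ℕ → ℕ := fun i => Nat.rec 0 (fun _ Ni => k Ni + 1) i
  set mi : ℕ → ℕ := fun i => m (Nf i) with hmi
  set ki : ℕ → ℕ := fun i => k (Nf i) with hki
  have hmiki : ∀ i, mi i ≤ ki i := fun i => hmk (Nf i)
  have hmi_mono : StrictMono mi := by
    apply strictMono_nat_of_lt_succ
    intro i
    calc mi i ≤ ki i := hmiki i
    _ < ki i + 1 := Nat.lt_succ_self _
    _ ≤ mi (i + 1) := hmN _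
  have hmi_ge : ∀ i, i ≤ mi i := fun i => (hmi_mono.id_le i)
  -- build h
  set M : ℕ → ℕ := fun n => (Finset.range (n + 1)).sup (fun i => if mi i ≤ n then ki i else 0) with hM
  have hMmono : Monotone M := by
    intro n n' hnn'
    apply Finset.sup_le
    intro i hi
    simp only [Finset.mem_range] at hi
    by_cases hc : mi i ≤ n
    · have : mi i ≤ n' := hc.trans hnn'
      simp only [if_pos hc]
      have hi' : i ∈ Finset.range (n' + 1) := Finset.mem_range.mpr (lt_of_lt_of_le hi (by omega))
      calc ki i = (fun i => if mi i ≤ n' then ki i else 0) i := by simp [this]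
      _ ≤ M n' := by
        rw [hM]
        exact Finset.le_sup (f := fun i => if mi i ≤ n' then ki i else 0) hi'
    · simp [hc]
  set h : ℕ → ℕ := fun n => n + 1 + M n with hh
  have hmono : StrictMono h := by
    intro n n' hnn'
    have := hMmono hnn'.le
    simp only [hh]
    omega
  have hgt : ∀ n, n < h n := fun n => by simp [hh]; omega
  have hkey : ∀ i, ki i ≤ h (mi i) := by
    intro i
    have hi' : i ∈ Finset.range (mi i + 1) := Finset.mem_range.mpr (Nat.lt_succ_of_le (hmi_ge i))
    have : (if mi i ≤ mi i then ki i else 0) ≤ M (mi i) := by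
      rw [hM]
      exact Finset.le_sup (f := fun j => if mi j ≤ mi i then ki j else 0) hi'
    simp only [if_pos le_rfl] at this
    simp only [hh]
    omega
  have htend := (hx h hmono hgt).comp (hmi_mono.tendsto_atTop)
  rw [Metric.tendsto_atTop] at htend
  obtain ⟨I, hI⟩ := htend ε hε
  have hdiam := hI I le_rfl
  simp only [Function.comp, Real.dist_eq, sub_zero] at hdiam
  have hbd : Bornology.IsBounded (x '' Set.Icc (mi I) (h (mi I))) :=
    ((Set.finite_Icc _ _).image x).isBounded
  have h1 : x (mi I) ∈ x '' Set.Icc (mi I) (h (mi I)) :=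
    ⟨mi I, ⟨le_rfl, (hgt (mi I)).le⟩, rfl⟩
  have h2 : x (ki I) ∈ x '' Set.Icc (mi I) (h (mi I)) :=
    ⟨ki I, ⟨hmiki I, hkey I⟩, rfl⟩
  have := Metric.dist_le_diam_of_mem hbd h1 h2
  have hεle : ε ≤ Metric.diam (x '' Set.Icc (mi I) (h (mi I))) := le_trans (hdk (Nf I)) this
  have hnn := Metric.diam_nonneg (s := x '' Set.Icc (mi I) (h (mi I)))
  rw [abs_of_nonneg hnn] at hdiam
  linarith
end

section
/- Let (a_n) be a sequence of reals such that for every n there exists k > n with Σ_{m=n+1}^{k} |a_m| ≥ 2. Then there exists a permutation σ of ℕ such that the series Σ_n a_{σ(n)} diverges. -/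
/-!
Cut ℕ into consecutive finite blocks on each of which `∑ |a m| ≥ 2`. Splitting a block by the
sign of `a`, one of the two parts `t` has `|∑_{m ∈ t} a m| ≥ 1`. A permutation that preserves
every block and lists `t` first makes the partial sums jump by at least `1` across each of these
stretches, arbitrarily far out, so they are not Cauchy.
-/

open Finset

theorem Equiv.Perm.exists_comp_eq_of_mk_fiber_eq {α γ : Type*} {f g : α → γ}
    (h : ∀ c, Cardinal.mk {x // f x = c} = Cardinal.mk {x // g x = c}) :
    ∃ σ : Equiv.Perm α, ∀ x, g (σ x) = f x :=
  ⟨Equiv.ofFiberEquiv fun c => (Cardinal.eq.mp (h c)).some, Equiv.ofFiberEquiv_map _⟩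

theorem Finset.exists_subset_sum_abs_le_two_mul_abs_sum {ι : Type*} (s : Finset ι) (f : ι → ℝ) :
    ∃ t ⊆ s, ∑ i ∈ s, |f i| ≤ 2 * |∑ i ∈ t, f i| := by
  classical
  set P := s.filter (0 ≤ f ·)
  set Q := s.filter (¬ 0 ≤ f ·)
  have hP : ∑ i ∈ P, |f i| = |∑ i ∈ P, f i| := by
    rw [abs_sum_of_nonneg fun i hi => (mem_filter.1 hi).2]
    exact sum_congr rfl fun i hi => abs_of_nonneg (mem_filter.1 hi).2
  have hQ : ∑ i ∈ Q, |f i| = |∑ i ∈ Q, f i| := by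
    rw [← abs_neg, ← sum_neg_distrib, abs_sum_of_nonneg fun i hi => ?_]
    · exact sum_congr rfl fun i hi => abs_of_neg (not_le.1 (mem_filter.1 hi).2)
    · exact neg_nonneg.2 (not_le.1 (mem_filter.1 hi).2).le
  have hsplit : ∑ i ∈ s, |f i| = |∑ i ∈ P, f i| + |∑ i ∈ Q, f i| := by
    rw [← hP, ← hQ, sum_filter_add_sum_filter_not]
  rcases le_total |∑ i ∈ P, f i| |∑ i ∈ Q, f i| with hPQ | hQP
  · exact ⟨Q, filter_subset _ _, by linarith⟩
  · exact ⟨P, filter_subset _ _, by linarith⟩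

theorem not_cauchySeq_sum_range_of_frequently {E : Type*} [SeminormedAddCommGroup E]
    {f : ℕ → E} {ε : ℝ} (hε : 0 < ε)
    (h : ∀ M, ∃ p q, M ≤ p ∧ p ≤ q ∧ ε ≤ ‖∑ n ∈ Ico p q, f n‖) :
    ¬ CauchySeq fun m => ∑ n ∈ range m, f n := by
  intro hf
  obtain ⟨M, hM⟩ := Metric.cauchySeq_iff.1 hf ε hε
  obtain ⟨p, q, hMp, hpq, hεpq⟩ := h M
  have hlt := hM q (hMp.trans hpq) p hMp
  rw [dist_eq_norm, ← sum_Ico_eq_sub _ hpq] at hlt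
  exact (hεpq.trans_lt hlt).false

section Blocks

variable {N : ℕ → ℕ}

def blockIdx (N : ℕ → ℕ) (m : ℕ) : ℕ := Nat.findGreatest (fun i => N i ≤ m) m

theorem blockIdx_eq_iff (hN : StrictMono N) (h0 : N 0 = 0) {m i : ℕ} :
    blockIdx N m = i ↔ m ∈ Ico (N i) (N (i + 1)) := by
  have hle : N (blockIdx N m) ≤ m := Nat.findGreatest_spec (P := fun i => N i ≤ m) m.zero_le (h0.trans_le m.zero_le)
  have hlt : m < N (blockIdx N m + 1) := by
    by_contra! hge
    have := Nat.le_findGreatest (P := fun i => N i ≤ m) ((hN.id_le _).trans hge) hge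
    exact (blockIdx N m).lt_succ_self.not_ge this
  constructor
  · rintro rfl
    exact mem_Ico.2 ⟨hle, hlt⟩
  · intro hm
    rw [mem_Ico] at hm
    have h1 : blockIdx N m < i + 1 := hN.lt_iff_lt.1 (hle.trans_lt hm.2)
    have h2 : i < blockIdx N m + 1 := hN.lt_iff_lt.1 (hm.1.trans_lt hlt)
    omega

/-- A permutation `σ` with `blockLabel N t ∘ σ = blockLabel N u` preserves each block and
maps `u i` onto `t i`. -/
def blockLabel (N : ℕ → ℕ) (s : ℕ → Finset ℕ) (m : ℕ) : ℕ × Bool :=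
  (blockIdx N m, decide (m ∈ s (blockIdx N m)))

variable {s : ℕ → Finset ℕ}

theorem blockLabel_eq_true_iff (hN : StrictMono N) (h0 : N 0 = 0)
    (hs : ∀ i, s i ⊆ Ico (N i) (N (i + 1))) {m i : ℕ} :
    blockLabel N s m = (i, true) ↔ m ∈ s i := by
  simp only [blockLabel, Prod.mk.injEq, decide_eq_true_eq]
  refine ⟨fun ⟨hi, hm⟩ => hi ▸ hm, fun hm => ?_⟩
  obtain rfl := (blockIdx_eq_iff hN h0).2 (hs i hm)
  exact ⟨rfl, hm⟩

theorem blockLabel_eq_false_iff (hN : StrictMono N) (h0 : N 0 = 0) {m i : ℕ} :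
    blockLabel N s m = (i, false) ↔ m ∈ Ico (N i) (N (i + 1)) \ s i := by
  simp only [blockLabel, Prod.mk.injEq, decide_eq_false_iff_not, mem_sdiff, ← blockIdx_eq_iff hN h0]
  exact and_congr_right fun hi => hi ▸ Iff.rfl

theorem mk_blockLabel_fiber (hN : StrictMono N) (h0 : N 0 = 0)
    (hs : ∀ i, s i ⊆ Ico (N i) (N (i + 1))) (i : ℕ) (b : Bool) :
    Cardinal.mk {m // blockLabel N s m = (i, b)} =
      ((if b then #(s i) else N (i + 1) - N i - #(s i) : ℕ) : Cardinal) := by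
  cases b
  · rw [Cardinal.mk_congr (Equiv.subtypeEquivRight fun _ => blockLabel_eq_false_iff hN h0),
      Cardinal.mk_coe_finset, card_sdiff_of_subset (hs i), Nat.card_Ico]
    rfl
  · rw [Cardinal.mk_congr (Equiv.subtypeEquivRight fun _ => blockLabel_eq_true_iff hN h0 hs),
      Cardinal.mk_coe_finset]
    rfl

theorem exists_perm_image_Ico_eq (hN : StrictMono N) (h0 : N 0 = 0) (t : ℕ → Finset ℕ)
    (ht : ∀ i, t i ⊆ Ico (N i) (N (i + 1))) :
    ∃ σ : Equiv.Perm ℕ, ∀ i, (Ico (N i) (N i + #(t i))).image σ = t i := by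
  set u : ℕ → Finset ℕ := fun i => Ico (N i) (N i + #(t i))
  have hu_card (i : ℕ) : #(u i) = #(t i) := by simp [u]
  have hu (i : ℕ) : u i ⊆ Ico (N i) (N (i + 1)) := by
    have hcard := card_le_card (ht i)
    have hmono := hN.monotone (Nat.le_add_right i 1)
    rw [Nat.card_Ico] at hcard
    exact Ico_subset_Ico le_rfl (by omega)
  obtain ⟨σ, hσ⟩ := Equiv.Perm.exists_comp_eq_of_mk_fiber_eq (f := blockLabel N u)
    (g := blockLabel N t) fun ⟨i, b⟩ => by
      rw [mk_blockLabel_fiber hN h0 hu, mk_blockLabel_fiber hN h0 ht, hu_card]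
  refine ⟨σ, fun i => eq_of_subset_of_card_le ?_ ?_⟩
  · simp only [image_subset_iff, ← blockLabel_eq_true_iff hN h0 ht, hσ]
    exact fun m hm => (blockLabel_eq_true_iff hN h0 hu).2 hm
  · rw [card_image_of_injective _ σ.injective, hu_card]

end Blocks

theorem exists_blocks_two_le_sum_abs {a : ℕ → ℝ}
    (h : ∀ n, ∃ k, n < k ∧ 2 ≤ ∑ m ∈ Icc (n + 1) k, |a m|) :
    ∃ N : ℕ → ℕ, StrictMono N ∧ N 0 = 0 ∧ ∀ i, 2 ≤ ∑ m ∈ Ico (N i) (N (i + 1)), |a m| := by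
  choose k hk hk2 using h
  let N : ℕ → ℕ := fun i => Nat.rec 0 (fun _ n => k n + 1) i
  refine ⟨N, strictMono_nat_of_lt_succ fun i => Nat.lt_succ_of_lt (hk _), rfl, fun i => ?_⟩
  refine (hk2 (N i)).trans (sum_le_sum_of_subset_of_nonneg ?_ fun _ _ _ => abs_nonneg _)
  show Icc (N i + 1) (k (N i)) ⊆ Ico (N i) (k (N i) + 1)
  intro m
  simp only [mem_Icc, mem_Ico]
  omega

theorem diverging_permutation (a : ℕ → ℝ)
    (h : ∀ n : ℕ, ∃ k, n < k ∧ 2 ≤ ∑ m ∈ Finset.Icc (n + 1) k, |a m|) :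
    ∃ σ : Equiv.Perm ℕ,
      ¬ ∃ L : ℝ, Filter.Tendsto (fun m => ∑ n ∈ Finset.range m, a (σ n))
        Filter.atTop (nhds L) := by
  obtain ⟨N, hN, hN0, hN2⟩ := exists_blocks_two_le_sum_abs h
  choose t ht hat using fun i => (Ico (N i) (N (i + 1))).exists_subset_sum_abs_le_two_mul_abs_sum a
  obtain ⟨σ, hσ⟩ := exists_perm_image_Ico_eq hN hN0 t ht
  refine ⟨σ, fun ⟨L, hL⟩ => not_cauchySeq_sum_range_of_frequently one_pos (fun M => ?_) hL.cauchySeq⟩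
  refine ⟨N M, N M + #(t M), hN.id_le M, le_self_add, ?_⟩
  rw [Real.norm_eq_abs, ← sum_image σ.injective.injOn, hσ]
  linarith [hN2 M, hat M]
end

section
/- Let (x_n) be a sequence of reals and δ > 0 such that for every k there exist m, n with k ≤ m < n and |x_m − x_n| ≥ δ. Then there exists a strictly increasing function h : ℕ → ℕ with h(k) > k for all k, such that diam{x_k, x_{k+1}, ..., x_{h(k)}} ≥ δ for all k; in particular (x_n) is not partially Cauchy. -/
theorem not_partially_cauchy_witness (x : ℕ → ℝ) (δ : ℝ) (hδ : 0 < δ)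
    (hx : ∀ k : ℕ, ∃ m n : ℕ, k ≤ m ∧ m < n ∧ δ ≤ |x m - x n|) :
    ∃ h : ℕ → ℕ, StrictMono h ∧ (∀ k, k < h k) ∧
      (∀ k, δ ≤ Metric.diam (x '' Set.Icc k (h k))) ∧
      ¬ Filter.Tendsto (fun k => Metric.diam (x '' Set.Icc k (h k)))
        Filter.atTop (nhds 0) := by
  choose f g hf hfg hd using hx
  -- define h recursively
  let h : ℕ → ℕ := fun k => Nat.rec (g 0) (fun k ih => max (g (k+1)) (ih + 1)) k
  have hstep : ∀ k, h (k+1) = max (g (k+1)) (h k + 1) := fun k => rfl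
  have hgk : ∀ k, k < g k := fun k => lt_of_le_of_lt (hf k) (hfg k)
  have hmono : StrictMono h := strictMono_nat_of_lt_succ (fun k => by
    rw [hstep]; exact lt_of_lt_of_le (Nat.lt_succ_self _) (le_max_right _ _))
  have hge : ∀ k, g k ≤ h k := by
    intro k; cases k with
    | zero => exact le_refl _
    | succ k => rw [hstep]; exact le_max_left _ _
  have hlt : ∀ k, k < h k := fun k => lt_of_lt_of_le (hgk k) (hge k)
  have hdiam : ∀ k, δ ≤ Metric.diam (x '' Set.Icc k (h k)) := by
    intro k
    have hb : Bornology.IsBounded (x '' Set.Icc k (h k)) :=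
      ((Set.finite_Icc k (h k)).image x).isBounded
    have hm : x (f k) ∈ x '' Set.Icc k (h k) :=
      ⟨f k, ⟨hf k, (le_of_lt (hfg k)).trans (hge k)⟩, rfl⟩
    have hn : x (g k) ∈ x '' Set.Icc k (h k) :=
      ⟨g k, ⟨le_trans (hf k) (le_of_lt (hfg k)), hge k⟩, rfl⟩
    calc δ ≤ |x (f k) - x (g k)| := hd k
    _ = dist (x (f k)) (x (g k)) := (Real.dist_eq _ _).symm
    _ ≤ Metric.diam (x '' Set.Icc k (h k)) := Metric.dist_le_diam_of_mem hb hm hn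
  refine ⟨h, hmono, hlt, hdiam, fun ht => ?_⟩
  have := (Metric.tendsto_nhds.mp ht) δ hδ
  rcases this.exists with ⟨k, hk⟩
  rw [Real.dist_eq, sub_zero] at hk
  exact absurd (hdiam k) (not_le.mpr (lt_of_abs_lt hk))
end

section
/- Let ε > 0, let h : ℕ → ℕ be strictly increasing with h(n) > n, and let j ∈ ℕ. Then there exists a sequence (x_n) of reals that is eventually constant (hence Cauchy), satisfies diam{x_n, ..., x_{h(n)}} < ε for all n ≥ j, and satisfies x_m − x_j > 1 for some m > j. -/
theorem partially_cauchy_like_but_rising (ε : ℝ) (hε : 0 < ε)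
    (h : ℕ → ℕ) (hmono : StrictMono h) (hgt : ∀ n, n < h n) (j : ℕ) :
    ∃ x : ℕ → ℝ,
      (∃ N : ℕ, ∃ c : ℝ, ∀ n, N ≤ n → x n = c) ∧
      (∀ n, j ≤ n → Metric.diam (x '' Set.Icc n (h n)) < ε) ∧
      (∃ m, j < m ∧ 1 < x m - x j) := by
  set δ : ℝ := ε / 2 with hδ
  have hδpos : 0 < δ := by positivity
  -- block start indices
  let s : ℕ → ℕ := fun k => Nat.rec j (fun _ acc => h acc + 1) k
  have hs0 : s 0 = j := rfl
  have hssucc : ∀ k, s (k + 1) = h (s k) + 1 := fun k => rfl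
  have hsmono : StrictMono s := strictMono_nat_of_lt_succ (fun k => by
    rw [hssucc]; exact Nat.lt_succ_of_lt (hgt _))
  have hsle : ∀ k, k ≤ s k := fun k => hsmono.le_apply
  -- block index of n
  let B : ℕ → ℕ := fun n => @Nat.findGreatest (fun k => s k ≤ n) (fun _ => Nat.decLe _ _) n
  have hBspec : ∀ n, j ≤ n → s (B n) ≤ n := by
    intro n hn
    exact @Nat.findGreatest_spec 0 (fun k => s k ≤ n) (fun _ => Nat.decLe _ _) n
      (Nat.zero_le n) (show s 0 ≤ n by rw [hs0]; exact hn)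
  have hBmono : ∀ m n, j ≤ m → m ≤ n → B m ≤ B n := by
    intro m n hjm hmn
    exact @Nat.le_findGreatest (B m) (fun k => s k ≤ n) (fun _ => Nat.decLe _ _) n
      (le_trans (@Nat.findGreatest_le (fun k => s k ≤ m) (fun _ => Nat.decLe _ _) m) hmn) (le_trans (hBspec m hjm) hmn)
  have hBnext : ∀ n, j ≤ n → s (B n + 1) > n := by
    intro n hn
    by_contra hc
    push_neg at hc
    have h1 : B n + 1 ≤ n := le_trans (hsle _) hc
    have h2 : B n + 1 ≤ B n :=
      @Nat.le_findGreatest (B n + 1) (fun k => s k ≤ n) (fun _ => Nat.decLe _ _) n h1 hc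
    omega
  have hBstep : ∀ n, j ≤ n → B (h n) ≤ B n + 1 := by
    intro n hn
    by_contra hc
    push_neg at hc
    have h2 : B n + 2 ≤ B (h n) := hc
    have hs2 : s (B (h n)) ≤ h n :=
      hBspec (h n) (le_trans hn (le_of_lt (hgt n)))
    have h3 : s (B n + 2) ≤ h n := le_trans (hsmono.monotone h2) hs2
    have h4 : n + 1 ≤ s (B n + 1) := hBnext n hn
    have h5 : h (n + 1) ≤ h (s (B n + 1)) := hmono.monotone h4
    have h6 : h n < h (n + 1) := hmono (Nat.lt_succ_self n)
    have h7 : s (B n + 2) = h (s (B n + 1)) + 1 := hssucc (B n + 1)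
    omega
  -- the sequence
  refine ⟨fun n => min (δ * B n) 2, ?_, ?_, ?_⟩
  · -- eventually constant
    set K : ℕ := ⌈(2 : ℝ) / δ⌉₊ with hK
    refine ⟨s K, 2, fun n hn => ?_⟩
    have hjn : j ≤ n := le_trans (by rw [← hs0]; exact hsmono.monotone (Nat.zero_le K)) hn
    have hKB : K ≤ B n :=
      @Nat.le_findGreatest K (fun k => s k ≤ n) (fun _ => Nat.decLe _ _) n
        (le_trans (hsle K) hn) hn
    have h2K : 2 ≤ δ * K := by
      rw [← div_le_iff₀' hδpos]
      exact Nat.le_ceil _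
    have : (2 : ℝ) ≤ δ * B n := le_trans h2K (by
      have : (K : ℝ) ≤ B n := Nat.cast_le.mpr hKB
      nlinarith)
    simp [min_eq_right this]
  · -- diameter bound
    intro n hn
    have hsub : (fun n => min (δ * B n) 2) '' Set.Icc n (h n) ⊆
        Set.Icc (min (δ * B n) 2) (min (δ * B n) 2 + δ) := by
      rintro _ ⟨i, hi, rfl⟩
      obtain ⟨hni, hih⟩ := hi
      have hBlo : B n ≤ B i := hBmono n i hn hni
      have hji : j ≤ i := le_trans hn hni
      have hBhi : B i ≤ B n + 1 :=
        le_trans (hBmono i (h n) hji hih) (hBstep n hn)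
      constructor
      · exact min_le_min (by
          have : (B n : ℝ) ≤ B i := Nat.cast_le.mpr hBlo
          nlinarith) le_rfl
      · have h1 : δ * B i ≤ δ * B n + δ := by
          have : (B i : ℝ) ≤ B n + 1 := by exact_mod_cast hBhi
          nlinarith
        calc min (δ * B i) 2 ≤ min (δ * B n + δ) (2 + δ) :=
              min_le_min h1 (by linarith)
          _ = min (δ * B n) 2 + δ := by rw [← min_add_add_right]
    calc Metric.diam ((fun n => min (δ * B n) 2) '' Set.Icc n (h n))
        ≤ Metric.diam (Set.Icc (min (δ * B n) 2) (min (δ * B n) 2 + δ)) :=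
          Metric.diam_mono hsub (Metric.isBounded_Icc _ _)
      _ = δ := by rw [Real.diam_Icc (by linarith)]; ring
      _ < ε := by rw [hδ]; linarith
  · -- rising
    set K : ℕ := ⌈(2 : ℝ) / δ⌉₊ with hK
    have hKpos : 0 < K := Nat.ceil_pos.mpr (by positivity)
    refine ⟨s K, ?_, ?_⟩
    · rw [← hs0]; exact hsmono hKpos
    · have hBj : B j = 0 := by
        apply (@Nat.findGreatest_eq_zero_iff j (fun k => s k ≤ j) (fun _ => Nat.decLe _ _)).mpr
        intro k hk _ hsk
        have := hsmono hk
        rw [hs0] at this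
        omega
      have hxj : min (δ * (B j : ℝ)) 2 = 0 := by
        rw [hBj]; simp
      have hKB : K ≤ B (s K) :=
        @Nat.le_findGreatest K (fun k => s k ≤ s K) (fun _ => Nat.decLe _ _) (s K)
          (hsle K) le_rfl
      have h2K : 2 ≤ δ * K := by
        rw [← div_le_iff₀' hδpos]
        exact Nat.le_ceil _
      have h2 : (2 : ℝ) ≤ δ * B (s K) := le_trans h2K (by
        have : (K : ℝ) ≤ B (s K) := Nat.cast_le.mpr hKB
        nlinarith)
      show 1 < min (δ * B (s K)) 2 - min (δ * (B j : ℝ)) 2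
      rw [hxj, min_eq_right h2]
      norm_num
end

section
/- Let q be a sequence of reals that is eventually 0 and sums to 0, let S be a finite set of permutations of ℕ, and for each σ ∈ S let ε_σ > 0 and M_σ ∈ ℕ be such that |Σ_{n=0}^m q_{σ(n)}| < ε_σ for all m > M_σ. Then for every B > 0 there exists a sequence q' of reals, eventually 0 and summing to 0, agreeing with q on any prescribed finite initial segment on which they already satisfy the interval constraints, still satisfying |Σ_{n=0}^m q'_{σ(n)}| < ε_σ for all σ ∈ S and m > M_σ, and with Σ_n |q'_n| > B. -/
open Finset

lemma sum_range_eq_of_ev_zero {f : ℕ → ℝ} {N : ℕ}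
    (h : ∀ n, N ≤ n → f n = 0) {m : ℕ} (hm : N ≤ m) :
    ∑ n ∈ range m, f n = ∑ n ∈ range N, f n :=
  (Finset.sum_subset (Finset.range_subset_range.2 hm)
    (fun x _ hx => h x (by simpa using hx))).symm

lemma perm_sum_eq {f : ℕ → ℝ} {N : ℕ}
    (h : ∀ n, N ≤ n → f n = 0) (σ : Equiv.Perm ℕ) {m : ℕ}
    (hm : ∀ k, k < N → σ.symm k ≤ m) :
    ∑ n ∈ range (m+1), f (σ n) = ∑ n ∈ range N, f n := by
  have hmap : ∑ n ∈ range (m+1), f (σ n)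
      = ∑ x ∈ (range (m+1)).map ⟨σ, σ.injective⟩, f x := by
    rw [Finset.sum_map]; rfl
  rw [hmap]
  refine (Finset.sum_subset ?_ ?_).symm
  · intro k hk
    simp only [Finset.mem_map, Finset.mem_range, Function.Embedding.coeFn_mk]
    exact ⟨σ.symm k, Nat.lt_succ_of_le (hm k (mem_range.1 hk)),
      Equiv.apply_symm_apply σ k⟩
  · intro x _ hx
    exact h x (le_of_not_gt (by simpa using hx))

theorem density_argument (q : ℕ → ℝ)
    (hev : ∃ N : ℕ, ∀ n, N ≤ n → q n = 0)
    (hsum : Filter.Tendsto (fun m => ∑ n ∈ Finset.range m, q n)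
      Filter.atTop (nhds 0))
    (S : Finset (Equiv.Perm ℕ)) (ε : Equiv.Perm ℕ → ℝ) (M : Equiv.Perm ℕ → ℕ)
    (hε : ∀ σ ∈ S, 0 < ε σ)
    (hq : ∀ σ ∈ S, ∀ m, M σ < m →
      |∑ n ∈ Finset.range (m + 1), q (σ n)| < ε σ)
    (K : ℕ) (B : ℝ) (hB : 0 < B) :
    ∃ q' : ℕ → ℝ,
      (∃ N : ℕ, ∀ n, N ≤ n → q' n = 0) ∧
      Filter.Tendsto (fun m => ∑ n ∈ Finset.range m, q' n)
        Filter.atTop (nhds 0) ∧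
      (∀ n, n < K → q' n = q n) ∧
      (∀ σ ∈ S, ∀ m, M σ < m →
        |∑ n ∈ Finset.range (m + 1), q' (σ n)| < ε σ) ∧
      (∃ m, B < ∑ n ∈ Finset.range m, |q' n|) := by
  classical
  obtain ⟨N, hN⟩ := hev
  -- total sum is zero
  have htot : ∑ n ∈ range N, q n = 0 := by
    have h1 : Filter.Tendsto (fun m => ∑ n ∈ Finset.range m, q n) Filter.atTop
        (nhds (∑ n ∈ range N, q n)) := by
      apply Filter.Tendsto.congr' _ tendsto_const_nhds
      filter_upwards [Filter.eventually_ge_atTop N] with m hm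
      exact (sum_range_eq_of_ev_zero hN hm).symm
    exact tendsto_nhds_unique h1 hsum
  -- permuted partial sums are eventually zero
  have hpz : ∀ σ : Equiv.Perm ℕ, ∀ m : ℕ, (range N).sup (fun k => σ.symm k) ≤ m →
      ∑ n ∈ range (m+1), q (σ n) = 0 := by
    intro σ m hm
    rw [perm_sum_eq hN σ (fun k hk => le_trans (Finset.le_sup (mem_range.2 hk)) hm)]
    exact htot
  -- choice of δ
  have hδex : ∃ δ : ℝ, 0 < δ ∧ ∀ σ ∈ S, ∀ m, M σ < m →
      |∑ n ∈ range (m+1), q (σ n)| + δ < ε σ := by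
    have key : ∀ σ : Equiv.Perm ℕ, ∃ d : ℝ, 0 < d ∧ (σ ∈ S → ∀ m, M σ < m →
        |∑ n ∈ range (m+1), q (σ n)| + d < ε σ) := by
      intro σ
      by_cases hσ : σ ∈ S
      · set R := (range N).sup (fun k => σ.symm k) with hR
        set F : Finset ℝ := insert (ε σ)
          ((Finset.Icc (M σ + 1) R).image
            (fun m => ε σ - |∑ n ∈ range (m+1), q (σ n)|)) with hF
        have hFne : F.Nonempty := ⟨_, mem_insert_self _ _⟩
        have hFpos : ∀ x ∈ F, 0 < x := by
          intro x hx
          rcases Finset.mem_insert.1 hx with rfl | hx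
          · exact hε σ hσ
          · obtain ⟨m, hm, rfl⟩ := Finset.mem_image.1 hx
            have := hq σ hσ m (Finset.mem_Icc.1 hm).1
            linarith
        have hmin : 0 < F.min' hFne := hFpos _ (F.min'_mem hFne)
        refine ⟨F.min' hFne / 2, by linarith, ?_⟩
        intro _ m hm
        rcases le_total m R with h | h
        · have hmem : (ε σ - |∑ n ∈ range (m+1), q (σ n)|) ∈ F :=
            Finset.mem_insert_of_mem (Finset.mem_image_of_mem _ (Finset.mem_Icc.2 ⟨hm, h⟩))
          have := F.min'_le _ hmem
          linarith
        · rw [hpz σ m h]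
          have : F.min' hFne ≤ ε σ := F.min'_le _ (mem_insert_self _ _)
          simp only [abs_zero]
          linarith
      · exact ⟨1, one_pos, fun h => absurd h hσ⟩
    choose f hf0 hf using key
    refine ⟨(insert (1:ℝ) (S.image f)).min' ⟨1, mem_insert_self _ _⟩, ?_, ?_⟩
    · have hmem := (insert (1:ℝ) (S.image f)).min'_mem ⟨1, mem_insert_self _ _⟩
      rcases Finset.mem_insert.1 hmem with h | h
      · rw [h]; exact one_pos
      · obtain ⟨σ, _, heq⟩ := Finset.mem_image.1 h
        rw [← heq]; exact hf0 σ
    · intro σ hσ m hm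
      have h1 := (insert (1:ℝ) (S.image f)).min'_le _
        (Finset.mem_insert_of_mem (Finset.mem_image_of_mem f hσ))
      have h2 := hf σ hσ m hm
      linarith
  obtain ⟨δ, hδ0, hδ⟩ := hδex
  -- picking fresh positions
  have hpick : ∀ C D : ℕ, ∃ p : ℕ, C < p ∧ ∀ σ ∈ S, D < σ.symm p ∧ D < σ.symm (p+1) := by
    intro C D
    set bad : Finset ℕ := S.biUnion (fun σ => (range (D+1)).image σ) with hbad
    set T : Finset ℕ := insert C bad with hT
    have hTne : T.Nonempty := ⟨C, mem_insert_self _ _⟩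
    refine ⟨T.max' hTne + 1, Nat.lt_succ_of_le (T.le_max' _ (mem_insert_self _ _)), ?_⟩
    intro σ hσ
    have hnotbad : ∀ x : ℕ, T.max' hTne < x → D < σ.symm x := by
      intro x hx
      by_contra h
      push_neg at h
      have hxb : x ∈ bad := Finset.mem_biUnion.2 ⟨σ, hσ,
        Finset.mem_image.2 ⟨σ.symm x, mem_range.2 (Nat.lt_succ_of_le h),
          Equiv.apply_symm_apply σ x⟩⟩
      exact absurd (T.le_max' x (Finset.mem_insert_of_mem hxb)) (not_le.2 hx)
    exact ⟨hnotbad _ (Nat.lt_succ_self _), hnotbad _ (by omega)⟩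
  choose pick hpickC hpickS using hpick
  set A : ℕ → ℕ := fun p => S.sup (fun σ => max (σ.symm p) (σ.symm (p+1))) with hA
  set P : ℕ → ℕ := fun j => Nat.rec (pick (max N K) 0) (fun _ p => pick (p + 1) (A p)) j
    with hP
  have hP0 : max N K < P 0 := hpickC _ _
  have hPsucc : ∀ j, P j + 1 < P (j+1) := fun j => hpickC _ _
  have hPmono : StrictMono P :=
    strictMono_nat_of_lt_succ (fun j => lt_trans (Nat.lt_succ_self _) (hPsucc j))
  have hPwin : ∀ j, ∀ σ ∈ S, A (P j) < σ.symm (P (j+1)) ∧ A (P j) < σ.symm (P (j+1) + 1) :=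
    fun j σ hσ => hpickS _ _ σ hσ
  have hAle : ∀ σ ∈ S, ∀ p, σ.symm p ≤ A p ∧ σ.symm (p + 1) ≤ A p := by
    intro σ hσ p
    have h := Finset.le_sup (f := fun σ : Equiv.Perm ℕ => max (σ.symm p) (σ.symm (p+1))) hσ
    exact ⟨le_trans (le_max_left _ _) h, le_trans (le_max_right _ _) h⟩
  have hchain : ∀ σ ∈ S, ∀ j j', j < j' →
      A (P j) < σ.symm (P j') ∧ A (P j) < σ.symm (P j' + 1) := by
    intro σ hσ j j' hj
    have hAm : StrictMono (fun j => A (P j)) :=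
      strictMono_nat_of_lt_succ (fun j =>
        lt_of_lt_of_le (hPwin j σ hσ).1 (hAle σ hσ (P (j+1))).1)
    obtain ⟨k, rfl⟩ : ∃ k, j' = k + 1 := ⟨j' - 1, (Nat.succ_pred_eq_of_pos (Nat.pos_of_ne_zero (by omega))).symm⟩
    have h1 : A (P j) ≤ A (P k) := hAm.monotone (Nat.lt_succ_iff.1 hj)
    exact ⟨lt_of_le_of_lt h1 (hPwin k σ hσ).1, lt_of_le_of_lt h1 (hPwin k σ hσ).2⟩
  -- the construction
  set J : ℕ := ⌈B / δ⌉₊ + 1 with hJ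
  set c : ℕ → ℝ := fun n => ∑ j ∈ range J,
    ((if n = P j then δ else 0) - (if n = P j + 1 then δ else 0)) with hc
  set q' : ℕ → ℝ := fun n => q n + c n with hq'def
  have hcsum : ∀ s : Finset ℕ, ∑ n ∈ s, c n =
      ∑ j ∈ range J, ((if P j ∈ s then δ else 0) - (if P j + 1 ∈ s then δ else 0)) := by
    intro s
    simp only [hc]
    rw [Finset.sum_comm]
    refine Finset.sum_congr rfl (fun j _ => ?_)
    rw [Finset.sum_sub_distrib, Finset.sum_ite_eq' s (P j) (fun _ => δ),
      Finset.sum_ite_eq' s (P j + 1) (fun _ => δ)]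
  have hPne : ∀ j j', P j ≠ P j' + 1 := by
    intro j j'
    rcases lt_or_ge j' j with h | h
    · have h1 := hPsucc j'
      have h2 := hPmono.monotone (show j' + 1 ≤ j by omega)
      omega
    · have := hPmono.monotone h
      omega
  have hc1 : ∀ j, j < J → c (P j) = δ := by
    intro j hj
    simp only [hc]
    rw [Finset.sum_eq_single_of_mem j (mem_range.2 hj)]
    · simp [hPne j j]
    · intro a _ ha
      rw [if_neg (fun h => ha (hPmono.injective h).symm), if_neg (hPne j a)]
      ring
  have hc2 : ∀ j, j < J → c (P j + 1) = -δ := by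
    intro j hj
    simp only [hc]
    rw [Finset.sum_eq_single_of_mem j (mem_range.2 hj)]
    · simp [Ne.symm (hPne j j)]
    · intro a _ ha
      rw [if_neg (Ne.symm (hPne a j)), if_neg (fun h => ha (hPmono.injective (by omega)).symm)]
      ring
  have hc0 : ∀ n, (∀ j, j < J → n ≠ P j ∧ n ≠ P j + 1) → c n = 0 := by
    intro n h
    simp only [hc]
    refine Finset.sum_eq_zero (fun j hj => ?_)
    rw [if_neg (h j (mem_range.1 hj)).1, if_neg (h j (mem_range.1 hj)).2]
    ring
  have hPge : ∀ j, max N K ≤ P j :=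
    fun j => le_trans (le_of_lt hP0) (hPmono.monotone (Nat.zero_le j))
  have hPltJ : ∀ j, j < J → P j + 1 < P J :=
    fun j hj => lt_of_lt_of_le (hPsucc j) (hPmono.monotone hj)
  have hq'ev : ∀ n, P J ≤ n → q' n = 0 := by
    intro n hn
    simp only [hq'def]
    rw [hN n (le_trans (le_trans (le_max_left N K) (hPge J)) hn),
      hc0 n (fun j hj => ⟨by have := hPltJ j hj; omega, by have := hPltJ j hj; omega⟩)]
    ring
  refine ⟨q', ⟨P J, hq'ev⟩, ?_, ?_, ?_, ?_⟩
  · -- tendsto 0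
    have hzero : ∑ n ∈ range (P J), q' n = 0 := by
      simp only [hq'def]
      rw [Finset.sum_add_distrib,
        sum_range_eq_of_ev_zero hN (le_trans (le_max_left N K) (hPge J)), htot,
        hcsum (range (P J))]
      rw [Finset.sum_congr rfl (fun j hj => ?_), Finset.sum_const_zero]
      · ring
      · rw [if_pos (mem_range.2 (by have := hPltJ j (mem_range.1 hj); omega)),
          if_pos (mem_range.2 (hPltJ j (mem_range.1 hj)))]
        ring
    apply Filter.Tendsto.congr' _ tendsto_const_nhds
    filter_upwards [Filter.eventually_ge_atTop (P J)] with m hm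
    rw [sum_range_eq_of_ev_zero hq'ev hm, hzero]
  · -- agrees below K
    intro n hn
    simp only [hq'def]
    rw [hc0 n (fun j _ => ⟨by have := hPge j; omega, by have := hPge j; omega⟩)]
    ring
  · -- the permutation constraints
    intro σ hσ m hm
    have hsplit : ∑ n ∈ range (m+1), q' (σ n)
        = (∑ n ∈ range (m+1), q (σ n)) + ∑ n ∈ range (m+1), c (σ n) := by
      simp only [hq'def]
      rw [Finset.sum_add_distrib]
    set s : Finset ℕ := (range (m+1)).map ⟨σ, σ.injective⟩ with hs
    have hcs : ∑ n ∈ range (m+1), c (σ n) = ∑ n ∈ s, c n := by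
      rw [hs, Finset.sum_map]; rfl
    have hmem : ∀ x : ℕ, x ∈ s ↔ σ.symm x ≤ m := by
      intro x
      rw [hs]
      simp only [Finset.mem_map, Finset.mem_range, Function.Embedding.coeFn_mk,
        Nat.lt_succ_iff]
      constructor
      · rintro ⟨n, hn, rfl⟩
        rw [Equiv.symm_apply_apply]; exact hn
      · intro h
        exact ⟨σ.symm x, h, Equiv.apply_symm_apply σ x⟩
    set t : ℕ → ℝ := fun j =>
      ((if σ.symm (P j) ≤ m then δ else 0) - (if σ.symm (P j + 1) ≤ m then δ else 0)) with ht
    have hteq : ∀ j, ((if P j ∈ s then δ else 0) - (if P j + 1 ∈ s then δ else 0)) = t j := by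
      intro j
      simp only [ht]
      congr 1
      · exact if_congr (hmem (P j)) rfl rfl
      · exact if_congr (hmem (P j + 1)) rfl rfl
    have htabs : ∀ j, |t j| ≤ δ := by
      intro j
      simp only [ht]
      split_ifs <;>
        simp [abs_of_nonneg hδ0.le, abs_of_nonpos, hδ0.le]
    have htb : |∑ j ∈ range J, t j| ≤ δ := by
      set T : Finset ℕ := (range J).filter (fun j => t j ≠ 0) with hT
      have hsumT : ∑ j ∈ range J, t j = ∑ j ∈ T, t j :=
        (Finset.sum_filter_of_ne (fun x _ h => h)).symm
      have hchar : ∀ j ∈ T, m < A (P j) ∧ (σ.symm (P j) ≤ m ∨ σ.symm (P j + 1) ≤ m) := by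
        intro j hj
        have hne := (Finset.mem_filter.1 hj).2
        simp only [ht] at hne
        by_cases h1 : σ.symm (P j) ≤ m <;> by_cases h2 : σ.symm (P j + 1) ≤ m
        · exact absurd (by rw [if_pos h1, if_pos h2]; ring) hne
        · exact ⟨lt_of_lt_of_le (not_le.1 h2) (hAle σ hσ (P j)).2, Or.inl h1⟩
        · exact ⟨lt_of_lt_of_le (not_le.1 h1) (hAle σ hσ (P j)).1, Or.inr h2⟩
        · exact absurd (by rw [if_neg h1, if_neg h2]; ring) hne
      have key : ∀ a b, a ∈ T → b ∈ T → a < b → False := by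
        intro a b ha hb hab
        have h1 := (hchar a ha).1
        have h2 := (hchar b hb).2
        have h3 := hchain σ hσ a b hab
        rcases h2 with h | h
        · exact absurd (lt_trans h1 (lt_of_lt_of_le h3.1 h)) (lt_irrefl m)
        · exact absurd (lt_trans h1 (lt_of_lt_of_le h3.2 h)) (lt_irrefl m)
      have hcard : T.card ≤ 1 := by
        rw [Finset.card_le_one]
        intro j hj j' hj'
        rcases lt_trichotomy j j' with h | h | h
        · exact absurd (key j j' hj hj' h) (fun h => h)
        · exact h
        · exact absurd (key j' j hj' hj h) (fun h => h)
      rw [hsumT]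
      rcases Nat.le_one_iff_eq_zero_or_eq_one.1 hcard with h | h
      · rw [Finset.card_eq_zero.1 h]
        simp [hδ0.le]
      · obtain ⟨j, hj⟩ := Finset.card_eq_one.1 h
        rw [hj, Finset.sum_singleton]
        exact htabs j
    have hb := hδ σ hσ m hm
    rw [hsplit, hcs, hcsum s, Finset.sum_congr rfl (fun j _ => hteq j)]
    calc |(∑ n ∈ range (m+1), q (σ n)) + ∑ j ∈ range J, t j|
        ≤ |∑ n ∈ range (m+1), q (σ n)| + |∑ j ∈ range J, t j| := abs_add_le _ _
      _ < ε σ := by linarith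
  · -- large absolute sum
    refine ⟨P J, ?_⟩
    have h1 : ∑ n ∈ (range J).image P, |q' n| ≤ ∑ n ∈ range (P J), |q' n| := by
      refine Finset.sum_le_sum_of_subset_of_nonneg ?_ (fun _ _ _ => abs_nonneg _)
      intro x hx
      obtain ⟨j, hj, rfl⟩ := Finset.mem_image.1 hx
      exact mem_range.2 (by have := hPltJ j (mem_range.1 hj); omega)
    have h2 : ∑ n ∈ (range J).image P, |q' n| = ∑ j ∈ range J, |q' (P j)| :=
      Finset.sum_image (fun a _ b _ h => hPmono.injective h)
    have h3 : ∀ j ∈ range J, |q' (P j)| = δ := by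
      intro j hj
      simp only [hq'def]
      rw [hN (P j) (le_trans (le_max_left N K) (hPge j)), hc1 j (mem_range.1 hj),
        zero_add, abs_of_pos hδ0]
    have h4 : ∑ j ∈ range J, |q' (P j)| = (J : ℝ) * δ := by
      rw [Finset.sum_congr rfl h3, Finset.sum_const, card_range, nsmul_eq_mul]
    have h5 : B < (J : ℝ) * δ := by
      have hle : B / δ < (J : ℝ) := by
        have := Nat.le_ceil (B / δ)
        simp only [hJ]
        push_cast
        linarith
      calc B = (B / δ) * δ := by field_simp
        _ < (J : ℝ) * δ := mul_lt_mul_of_pos_right hle hδ0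
    linarith
end
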